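/- arXiv:2012.06327 — 2 statements merged into one kernel-verified Lean document; each statement's English description precedes it below -/
import Mathlib

section
/- Let T_1 be the 2-colored graph with vertex set {1,2,3,4}, red edges {12, 34, 13, 24} and blue edges {12, 34, 14, 23}. For every n ≥ 1 with n ≠ 3, the maximum of |E_r(G)| + |E_b(G)| over all T_1-free 2-colored graphs G on n vertices equals C(n,2) + ⌊n²/4⌋, and for n = 3 this maximum equals 6. In particular, π_n(T_1) → 3/2 as n → ∞. -/
open Finset Filter

structure ColGraph (k r n : ℕ) where
  E : Fin k → Finset (Finset (Fin n))
  card_mem : ∀ i : Fin k, ∀ e ∈ E i, e.card = r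

namespace ColGraph

def IsSubgraph {k r m n : ℕ} (H : ColGraph k r m) (G : ColGraph k r n) : Prop :=
  ∃ f : Fin m → Fin n, Function.Injective f ∧
    ∀ i : Fin k, ∀ e ∈ H.E i, e.image f ∈ G.E i

noncomputable def density {k r n : ℕ} (G : ColGraph k r n) : ℝ :=
  (∑ i : Fin k, ((G.E i).card : ℝ)) / (n.choose r : ℝ)

noncomputable def turanDensityN {k r m : ℕ} (H : ColGraph k r m) (n : ℕ) : ℝ :=
  sSup {x : ℝ | ∃ G : ColGraph k r n, ¬ H.IsSubgraph G ∧ G.density = x}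

def IsHom {k r m p : ℕ} (G : ColGraph k r m) (H : ColGraph k r p) (f : Fin m → Fin p) : Prop :=
  ∀ i : Fin k, ∀ e ∈ G.E i, Set.InjOn f ↑e ∧ e.image f ∈ H.E i

def Colorable {k r m p : ℕ} (G : ColGraph k r m) (H : ColGraph k r p) : Prop :=
  ∃ f : Fin m → Fin p, G.IsHom H f

def blowUp {k r m : ℕ} (H : ColGraph k r m) (s : ℕ) : ColGraph k r (m * s) where
  E i := Finset.univ.filter (fun e : Finset (Fin (m * s)) =>
    e.card = r ∧ e.image (fun x => (finProdFinEquiv.symm x).1) ∈ H.E i)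
  card_mem i e he := (Finset.mem_filter.mp he).2.1

end ColGraph

noncomputable def famTuranDensityN {k r : ℕ} {ι : Type*} {v : ι → ℕ}
    (Hs : ∀ i, ColGraph k r (v i)) (n : ℕ) : ℝ :=
  sSup {x : ℝ | ∃ G : ColGraph k r n, (∀ i, ¬ (Hs i).IsSubgraph G) ∧ G.density = x}

def prodGraph {m p : ℕ} (G₁ : ColGraph 2 2 m) (G₂ : ColGraph 2 2 p) : ColGraph 2 2 (m * p) where
  E i := Finset.univ.filter (fun e : Finset (Fin (m * p)) =>
    e.card = 2 ∧ e.image (fun x => (finProdFinEquiv.symm x).1) ∈ G₁.E i ∧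
      e.image (fun x => (finProdFinEquiv.symm x).2) ∈ G₂.E i)
  card_mem i e he := (Finset.mem_filter.mp he).2.1

def IsBipartite {n : ℕ} (G : ColGraph 2 2 n) : Prop :=
  ∀ i : Fin 2, ∃ part : Fin n → Bool, ∀ e ∈ G.E i, ∃ u ∈ e, ∃ v ∈ e, part u ≠ part v

def mk2 {n : ℕ} (R B : Finset (Finset (Fin n)))
    (hR : ∀ e ∈ R, e.card = 2) (hB : ∀ e ∈ B, e.card = 2) : ColGraph 2 2 n where
  E := fun i => if i = 0 then R else B
  card_mem := by
    intro i e he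
    split at he
    · exact hR e he
    · exact hB e he

def Tgraph : ColGraph 2 2 4 :=
  mk2 {{0,1},{0,2},{2,3}} {{0,1},{1,2},{2,3}} (by decide) (by decide)

def K3 : ColGraph 2 2 3 :=
  mk2 {{0,1},{0,2},{1,2}} {{0,1},{0,2},{1,2}} (by decide) (by decide)

def K3minus : ColGraph 2 2 3 :=
  mk2 {{0,1},{0,2},{1,2}} {{0,1},{0,2}} (by decide) (by decide)

def T1 : ColGraph 2 2 4 :=
  mk2 {{0,1},{2,3},{0,2},{1,3}} {{0,1},{2,3},{0,3},{1,2}} (by decide) (by decide)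

def T2 : ColGraph 2 2 4 :=
  mk2 {{0,1},{0,3},{1,2},{1,3},{2,3}} {{0,1},{0,2},{0,3},{1,2},{2,3}} (by decide) (by decide)

set_option maxRecDepth 40000 in
def H8 : ColGraph 2 2 8 :=
  mk2 {{0,1},{0,2},{1,3},{2,3},{0,5},{2,6},{3,7},{1,4},{2,4},{0,7},{3,5},{1,6}}
      {{4,5},{4,6},{5,7},{6,7},{1,5},{0,4},{3,6},{2,7},{2,4},{0,7},{3,5},{1,6}}
      (by decide) (by decide)

structure Graph23 (n : ℕ) where
  E2 : Finset (Finset (Fin n))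
  E3 : Finset (Finset (Fin n))
  card2 : ∀ e ∈ E2, e.card = 2
  card3 : ∀ e ∈ E3, e.card = 3

namespace Graph23

noncomputable def density {n : ℕ} (G : Graph23 n) : ℝ :=
  (G.E2.card : ℝ) / (n.choose 2 : ℝ) + (G.E3.card : ℝ) / (n.choose 3 : ℝ)

def IsSubgraph {m n : ℕ} (H : Graph23 m) (G : Graph23 n) : Prop :=
  ∃ f : Fin m → Fin n, Function.Injective f ∧
    (∀ e ∈ H.E2, e.image f ∈ G.E2) ∧ (∀ e ∈ H.E3, e.image f ∈ G.E3)

noncomputable def turanDensityN {m : ℕ} (H : Graph23 m) (n : ℕ) : ℝ :=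
  sSup {x : ℝ | ∃ G : Graph23 n, ¬ H.IsSubgraph G ∧ G.density = x}

end Graph23

def lift23 {m : ℕ} (H : ColGraph 2 2 m) : Graph23 (m + 1) where
  E2 := (H.E 0).image (fun e => e.image Fin.castSucc)
  E3 := (H.E 1).image (fun e => insert (Fin.last m) (e.image Fin.castSucc))
  card2 := by
    intro e he
    simp only [Finset.mem_image] at he
    obtain ⟨e0, he0, rfl⟩ := he
    rw [Finset.card_image_of_injective _ (Fin.castSucc_injective m)]
    exact H.card_mem 0 e0 he0
  card3 := by
    intro e he
    simp only [Finset.mem_image] at he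
    obtain ⟨e0, he0, rfl⟩ := he
    rw [Finset.card_insert_of_notMem (by
      intro h
      simp only [Finset.mem_image] at h
      obtain ⟨x, _, hx⟩ := h
      exact (Fin.castSucc_lt_last x).ne hx)]
    rw [Finset.card_image_of_injective _ (Fin.castSucc_injective m), H.card_mem 1 e0 he0]

def H5 : Graph23 5 where
  E2 := {{0,1},{0,2},{2,3}}
  E3 := {{0,1,4},{0,2,4},{2,3,4}}
  card2 := by decide
  card3 := by decide


/-! Call a pair *double* if it carries both colours and *missing* if it carries none; with `D`
and `M` their numbers, `|E_r| + |E_b| = C(n,2) + D - M`. If `abc` and `abd` are triangles of double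
pairs, a red pair `cd` would complete a copy of `T_1` on `(a,d,b,c)` and a blue one a copy on
`(d,a,b,c)`, so in a `T_1`-free graph `cd` is missing. Hence a vertex outside a double triangle
sends at most one more double pair than missing pairs into it. Removing a double triangle and
inducting, with Mantel's theorem when there is none, gives `D - M ≤ ⌊s²/4⌋` on every set of
`s ≠ 3` vertices (and `D - M ≤ 3` on three). Equality holds when the red pairs are those meeting
one half of an equipartition and the blue pairs those meeting the other half. -/

lemma Nat.add_choose_two (a b : ℕ) : (a + b).choose 2 = a.choose 2 + b.choose 2 + a * b := by
  induction b with
  | zero => simp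
  | succ b ih =>
    rw [← add_assoc, Nat.choose_succ_succ', Nat.choose_one_right, ih, Nat.choose_succ_succ',
      Nat.choose_one_right]
    ring

lemma Nat.div_two_mul_sub_div_two (n : ℕ) : n / 2 * (n - n / 2) = n ^ 2 / 4 := by
  obtain ⟨k, rfl | rfl⟩ := Nat.even_or_odd' n
  · rw [show 2 * k / 2 = k by omega, show 2 * k - k = k by omega,
      show (2 * k) ^ 2 = 4 * (k * k) by ring]
    omega
  · rw [show (2 * k + 1) / 2 = k by omega, show 2 * k + 1 - k = k + 1 by omega,
      show (2 * k + 1) ^ 2 = 4 * (k * (k + 1)) + 1 by ring]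
    omega

lemma Nat.sq_le_four_mul_sq_div_four_add_one (n : ℕ) : n ^ 2 ≤ 4 * (n ^ 2 / 4) + 1 := by
  obtain ⟨k, rfl | rfl⟩ := Nat.even_or_odd' n
  · rw [show (2 * k) ^ 2 = 4 * (k * k) by ring]
    omega
  · rw [show (2 * k + 1) ^ 2 = 4 * (k * k + k) + 1 by ring]
    omega

lemma Nat.le_add_three_sq_div_four {t : ℕ} (ht : 1 ≤ t) :
    3 + t + (t ^ 2 / 4 + if t = 3 then 1 else 0) ≤ (t + 3) ^ 2 / 4 := by
  rcases (by omega : t = 1 ∨ t = 3 ∨ (2 ≤ t ∧ t ≠ 3)) with rfl | rfl | ⟨h2, h3⟩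
  · norm_num
  · norm_num
  · rw [if_neg h3, show (t + 3) ^ 2 = t ^ 2 + 6 * t + 9 by ring]
    omega

namespace SimpleGraph

variable {V : Type*}

section DegreeSum

variable (G : SimpleGraph V) [DecidableRel G.Adj]

def degreeSumOn (S : Finset V) : ℕ := ∑ u ∈ S, #{v ∈ S | G.Adj u v}

lemma degreeSumOn_union [DecidableEq V] {R T : Finset V} (h : Disjoint R T) :
    G.degreeSumOn (R ∪ T) =
      G.degreeSumOn R + G.degreeSumOn T + 2 * ∑ d ∈ T, #{r ∈ R | G.Adj d r} := by
  have cross : ∑ u ∈ R, #{v ∈ T | G.Adj u v} = ∑ d ∈ T, #{r ∈ R | G.Adj d r} := by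
    simp only [card_filter]
    rw [sum_comm]
    simp only [G.adj_comm]
  simp only [degreeSumOn, sum_union h, filter_union,
    card_union_of_disjoint (disjoint_filter_filter h), sum_add_distrib, cross]
  rw [← cross]
  ring

lemma degreeSumOn_le_mul [DecidableEq V] (S : Finset V) : G.degreeSumOn S ≤ #S * (#S - 1) := by
  refine sum_le_card_nsmul _ _ _ fun u hu => ?_
  rw [← card_erase_of_mem hu]
  exact card_le_card fun v hv => by
    rw [mem_filter] at hv
    exact mem_erase.mpr ⟨hv.2.ne', hv.1⟩

lemma degreeSumOn_univ [Fintype V] : G.degreeSumOn univ = 2 * #G.edgeFinset := by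
  simp only [degreeSumOn, ← sum_degrees_eq_twice_card_edges, ← card_neighborFinset_eq_degree,
    neighborFinset_eq_filter]

lemma degreeSumOn_eq_two_mul_card_edgeFinset_induce (S : Finset V) :
    G.degreeSumOn S = 2 * #(G.induce (S : Set V)).edgeFinset := by
  rw [← sum_degrees_eq_twice_card_edges, degreeSumOn, ← sum_coe_sort S]
  refine sum_congr rfl fun u _ => ?_
  rw [← card_neighborFinset_eq_degree, neighborFinset_eq_filter, card_filter, card_filter,
    ← sum_coe_sort S]
  rfl

lemma degreeSumOn_le_of_cliqueFreeOn {S : Finset V} (hS : G.CliqueFreeOn S 3) :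
    G.degreeSumOn S ≤ 2 * (#S ^ 2 / 4) := by
  have h := ((cliqueFree_induce_iff (G := G) S 3).mpr hS).card_edgeFinset_le
  dsimp only at h
  simp only [coe_sort_coe, Fintype.card_coe, Nat.choose_eq_zero_of_lt (Nat.mod_lt _ two_pos),
    add_zero, Nat.add_one_sub_one, mul_one] at h
  rw [degreeSumOn_eq_two_mul_card_edgeFinset_induce]
  gcongr
  exact h.trans (Nat.div_le_div_right (Nat.sub_le _ _))

end DegreeSum

variable [DecidableEq V]

def pairGraph (F : Finset (Finset V)) : SimpleGraph V where
  Adj u v := u ≠ v ∧ {u, v} ∈ F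
  symm := ⟨fun u v h => ⟨h.1.symm, pair_comm u v ▸ h.2⟩⟩
  loopless := ⟨fun _ h => h.1 rfl⟩

@[simp]
lemma pairGraph_adj {F : Finset (Finset V)} {u v : V} :
    (pairGraph F).Adj u v ↔ u ≠ v ∧ {u, v} ∈ F :=
  Iff.rfl

instance (F : Finset (Finset V)) : DecidableRel (pairGraph F).Adj :=
  fun _ _ => decidable_of_iff' _ pairGraph_adj

lemma card_edgeFinset_pairGraph [Fintype V] {F : Finset (Finset V)} (hF : ∀ e ∈ F, #e = 2) :
    #(pairGraph F).edgeFinset = #F := by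
  refine card_bij (fun z _ => z.toFinset) (fun z hz => ?_) (fun z _ w _ h => ?_) fun e he => ?_
  · induction z with
    | _ u v =>
      rw [mem_edgeFinset, mem_edgeSet, pairGraph_adj] at hz
      rw [Sym2.toFinset_mk_eq]
      exact hz.2
  · exact Sym2.ext fun x => by rw [← Sym2.mem_toFinset, h, Sym2.mem_toFinset]
  · obtain ⟨u, v, huv, rfl⟩ := card_eq_two.mp (hF e he)
    exact ⟨s(u, v), mem_edgeFinset.mpr (pairGraph_adj.mpr ⟨huv, he⟩), Sym2.toFinset_mk_eq⟩

/-- The two triangles `abc` and `abd` of `D` form a diamond with tips `c` and `d`. -/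
def DiamondTipsAdj (D M : SimpleGraph V) : Prop :=
  ∀ ⦃a b c d⦄, D.Adj a b → D.Adj a c → D.Adj b c → D.Adj a d → D.Adj b d → c ≠ d → M.Adj c d

variable {D M : SimpleGraph V} [DecidableRel D.Adj] [DecidableRel M.Adj]

lemma DiamondTipsAdj.card_adj_triangle_le (hDM : Disjoint D M) (hD : D.DiamondTipsAdj M)
    {a b c d : V} (hab : D.Adj a b) (hac : D.Adj a c) (hbc : D.Adj b c)
    (hd : d ∉ ({a, b, c} : Finset V)) :
    #{r ∈ {a, b, c} | D.Adj d r} ≤ #{r ∈ {a, b, c} | M.Adj d r} + 1 := by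
  have hne : a ∉ ({b, c} : Finset V) ∧ b ∉ ({c} : Finset V) := by
    simp [hab.ne, hac.ne, hbc.ne]
  simp only [mem_insert, mem_singleton, not_or] at hd
  rw [card_filter, card_filter, sum_insert hne.1, sum_insert hne.2, sum_singleton,
    sum_insert hne.1, sum_insert hne.2, sum_singleton]
  have hDM' := disjoint_left.mp hDM
  have tip_c := @hD a b c d hab hac hbc
  have tip_b := @hD a c b d hac hab hbc.symm
  have tip_a := @hD b c a d hbc hab.symm hac.symm
  simp only [D.adj_comm d, M.adj_comm d]
  split_ifs <;> simp_all

theorem DiamondTipsAdj.degreeSumOn_le (hDM : Disjoint D M) (hD : D.DiamondTipsAdj M)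
    (S : Finset V) :
    D.degreeSumOn S ≤ M.degreeSumOn S + 2 * (#S ^ 2 / 4 + if #S = 3 then 1 else 0) := by
  induction S using Finset.strongInduction with
  | _ S ih =>
    by_cases hfree : D.CliqueFreeOn S 3
    · have := D.degreeSumOn_le_of_cliqueFreeOn hfree
      omega
    obtain ⟨R, hRS, hR⟩ : ∃ R : Finset V, ↑R ⊆ (S : Set V) ∧ D.IsNClique 3 R := by
      simpa [CliqueFreeOn] using hfree
    obtain ⟨a, b, c, hab, hac, hbc, rfl⟩ := is3Clique_iff.mp hR
    rw [coe_subset] at hRS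
    have hR3 : #{a, b, c} = 3 := hR.card_eq
    set T := S \ {a, b, c}
    have hS : S = {a, b, c} ∪ T := (union_sdiff_of_subset hRS).symm
    have hdisj : Disjoint {a, b, c} T := disjoint_sdiff
    obtain ⟨t, hTt⟩ : ∃ t, #T = t := ⟨_, rfl⟩
    have hSt : #S = 3 + t := by rw [hS, card_union_of_disjoint hdisj, hR3, hTt]
    rcases Nat.eq_zero_or_pos t with rfl | ht
    · have := D.degreeSumOn_le_mul S
      rw [hSt] at this ⊢
      norm_num at this ⊢
      omega
    have hcross : ∑ d ∈ T, #{r ∈ {a, b, c} | D.Adj d r}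
        ≤ ∑ d ∈ T, #{r ∈ {a, b, c} | M.Adj d r} + t := by
      rw [← hTt, card_eq_sum_ones, ← sum_add_distrib]
      exact sum_le_sum fun d hd => hD.card_adj_triangle_le hDM hab hac hbc (mem_sdiff.mp hd).2
    have hIH := ih T (sdiff_ssubset hRS (by simp))
    have hRsum := D.degreeSumOn_le_mul {a, b, c}
    have hstep := Nat.le_add_three_sq_div_four ht
    rw [hR3] at hRsum
    rw [hTt] at hIH
    rw [hS, D.degreeSumOn_union hdisj, M.degreeSumOn_union hdisj, ← hS, hSt, if_neg (by omega),
      add_comm 3 t]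
    omega

end SimpleGraph

lemma T1_isSubgraph_of_mem {n : ℕ} {G : ColGraph 2 2 n} (f : Fin 4 → Fin n)
    (r01 : {f 0, f 1} ∈ G.E 0) (r23 : {f 2, f 3} ∈ G.E 0) (r02 : {f 0, f 2} ∈ G.E 0)
    (r13 : {f 1, f 3} ∈ G.E 0) (b01 : {f 0, f 1} ∈ G.E 1) (b23 : {f 2, f 3} ∈ G.E 1)
    (b03 : {f 0, f 3} ∈ G.E 1) (b12 : {f 1, f 2} ∈ G.E 1) : T1.IsSubgraph G := by
  have hE : ∀ k, ∀ e ∈ T1.E k, e.image f ∈ G.E k := by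
    intro k e he
    fin_cases k <;>
      simp only [T1, mk2, Fin.isValue, Fin.zero_eta, Fin.mk_one, one_ne_zero, ↓reduceIte,
        mem_insert, mem_singleton] at he <;>
      rcases he with rfl | rfl | rfl | rfl <;> simpa [image_insert]
  refine ⟨f, fun i j hij => ?_, hE⟩
  by_contra hne
  have hpairs : ∀ i j : Fin 4, i ≠ j → ∃ k, {i, j} ∈ T1.E k := by decide
  obtain ⟨k, hk⟩ := hpairs i j hne
  have := G.card_mem k _ (hE k _ hk)
  simp [image_insert, hij] at this

namespace ColGraph

open SimpleGraph

lemma E_subset_powersetCard {k r n : ℕ} (G : ColGraph k r n) (i : Fin k) :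
    G.E i ⊆ powersetCard r univ :=
  fun e he => mem_powersetCard.mpr ⟨subset_univ e, G.card_mem i e he⟩

section Upper

variable {n : ℕ} (G : ColGraph 2 2 n)

abbrev doubleGraph : SimpleGraph (Fin n) := pairGraph (G.E 0 ∩ G.E 1)

abbrev missingGraph : SimpleGraph (Fin n) := pairGraph (powersetCard 2 univ \ (G.E 0 ∪ G.E 1))

lemma card_E_add_card_edgeFinset_missingGraph :
    #(G.E 0) + #(G.E 1) + #G.missingGraph.edgeFinset
      = n.choose 2 + #G.doubleGraph.edgeFinset := by
  have hU := union_subset (G.E_subset_powersetCard 0) (G.E_subset_powersetCard 1)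
  have hM := card_sdiff_of_subset hU
  have hM' := card_le_card hU
  rw [card_powersetCard, card_univ, Fintype.card_fin] at hM hM'
  rw [card_edgeFinset_pairGraph, card_edgeFinset_pairGraph, hM, ← card_union_add_card_inter]
  · omega
  · exact fun e he => G.card_mem 0 e (mem_inter.mp he).1
  · exact fun e he => (mem_powersetCard.mp (mem_sdiff.mp he).1).2

lemma disjoint_doubleGraph_missingGraph : Disjoint G.doubleGraph G.missingGraph :=
  disjoint_left.mpr fun _ _ hD hM =>
    (mem_sdiff.mp hM.2).2 (mem_union_left _ (mem_inter.mp hD.2).1)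

lemma diamondTipsAdj_of_not_T1_isSubgraph (hG : ¬ T1.IsSubgraph G) :
    G.doubleGraph.DiamondTipsAdj G.missingGraph := by
  intro a b c d hab hac hbc had hbd hcd
  simp only [pairGraph_adj, mem_inter] at hab hac hbc had hbd
  have hpair : ({c, d} : Finset (Fin n)) ∈ powersetCard 2 univ :=
    mem_powersetCard.mpr ⟨subset_univ _, card_pair hcd⟩
  refine ⟨hcd, mem_sdiff.mpr ⟨hpair, fun hcd' => hG ?_⟩⟩
  rcases mem_union.mp hcd' with hred | hblue
  · exact T1_isSubgraph_of_mem ![a, d, b, c] had.2.1 hbc.2.1 hab.2.1 (pair_comm c d ▸ hred)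
      had.2.2 hbc.2.2 hac.2.2 (pair_comm b d ▸ hbd.2.2)
  · exact T1_isSubgraph_of_mem ![d, a, b, c] (pair_comm a d ▸ had.2.1) hbc.2.1
      (pair_comm b d ▸ hbd.2.1) hac.2.1 (pair_comm a d ▸ had.2.2) hbc.2.2
      (pair_comm c d ▸ hblue) hab.2.2

theorem card_E_add_card_E_le_of_not_T1_isSubgraph (hG : ¬ T1.IsSubgraph G) :
    #(G.E 0) + #(G.E 1) ≤ n.choose 2 + n ^ 2 / 4 + if n = 3 then 1 else 0 := by
  have h := (G.diamondTipsAdj_of_not_T1_isSubgraph hG).degreeSumOn_le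
    G.disjoint_doubleGraph_missingGraph univ
  rw [degreeSumOn_univ, degreeSumOn_univ, card_univ, Fintype.card_fin] at h
  have := G.card_E_add_card_edgeFinset_missingGraph
  omega

end Upper

section Construction

variable {n : ℕ}

def splitGraph (A : Finset (Fin n)) : ColGraph 2 2 n :=
  mk2 (powersetCard 2 univ \ powersetCard 2 Aᶜ) (powersetCard 2 univ \ powersetCard 2 A)
    (fun _ he => (mem_powersetCard.mp (mem_sdiff.mp he).1).2)
    (fun _ he => (mem_powersetCard.mp (mem_sdiff.mp he).1).2)

lemma card_E_splitGraph (A : Finset (Fin n)) :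
    #((splitGraph A).E 0) + #((splitGraph A).E 1) = n.choose 2 + #A * #Aᶜ := by
  have hn : n.choose 2 = (#A + #Aᶜ).choose 2 := by rw [card_add_card_compl, Fintype.card_fin]
  have hA := card_le_card (powersetCard_mono (n := 2) (subset_univ A))
  have hAc := card_le_card (powersetCard_mono (n := 2) (subset_univ Aᶜ))
  simp only [card_powersetCard, card_univ, Fintype.card_fin] at hA hAc
  simp only [splitGraph, mk2, Fin.isValue, if_true, one_ne_zero, if_false,
    card_sdiff_of_subset (powersetCard_mono (subset_univ _)), card_powersetCard, card_univ,
    Fintype.card_fin]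
  rw [hn, Nat.add_choose_two] at hA hAc ⊢
  omega

lemma mem_or_mem_of_mem_E_zero_splitGraph {A : Finset (Fin n)} {u v : Fin n}
    (h : {u, v} ∈ (splitGraph A).E 0) : u ∈ A ∨ v ∈ A := by
  simp only [splitGraph, mk2, if_pos, Finset.mem_sdiff, mem_powersetCard, insert_subset_iff,
    singleton_subset_iff, mem_compl] at h
  tauto

lemma not_mem_or_not_mem_of_mem_E_one_splitGraph {A : Finset (Fin n)} {u v : Fin n}
    (h : {u, v} ∈ (splitGraph A).E 1) : u ∉ A ∨ v ∉ A := by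
  simp only [splitGraph, mk2, Fin.isValue, one_ne_zero, if_false, Finset.mem_sdiff,
    mem_powersetCard, insert_subset_iff, singleton_subset_iff] at h
  tauto

lemma not_T1_isSubgraph_splitGraph (A : Finset (Fin n)) : ¬ T1.IsSubgraph (splitGraph A) := by
  rintro ⟨f, -, hf⟩
  have red : ∀ i j, {i, j} ∈ T1.E 0 → f i ∈ A ∨ f j ∈ A := by
    intro i j h
    have := hf 0 _ h
    rw [image_insert, image_singleton] at this
    exact mem_or_mem_of_mem_E_zero_splitGraph this
  have blue : ∀ i j, {i, j} ∈ T1.E 1 → ¬ (f i ∈ A ∧ f j ∈ A) := by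
    intro i j h
    have := hf 1 _ h
    rw [image_insert, image_singleton] at this
    have := not_mem_or_not_mem_of_mem_E_one_splitGraph this
    tauto
  have := red 0 1 (by decide)
  have := red 2 3 (by decide)
  have := red 0 2 (by decide)
  have := red 1 3 (by decide)
  have := blue 0 1 (by decide)
  have := blue 2 3 (by decide)
  have := blue 0 3 (by decide)
  have := blue 1 2 (by decide)
  tauto

end Construction

def freeEdgeCounts {r m : ℕ} (H : ColGraph 2 r m) (n : ℕ) : Set ℕ :=
  {N | ∃ G : ColGraph 2 r n, ¬ H.IsSubgraph G ∧ (G.E 0).card + (G.E 1).card = N}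

lemma turanDensityN_eq_of_isGreatest {r m n N : ℕ} {H : ColGraph 2 r m}
    (h : IsGreatest (H.freeEdgeCounts n) N) : H.turanDensityN n = N / n.choose r := by
  refine IsGreatest.csSup_eq ⟨?_, ?_⟩
  · obtain ⟨G, hG, hN⟩ := h.1
    exact ⟨G, hG, by rw [density, Fin.sum_univ_two, ← Nat.cast_add, hN]⟩
  · rintro x ⟨G, hG, rfl⟩
    rw [density, Fin.sum_univ_two, ← Nat.cast_add]
    gcongr
    exact h.2 ⟨G, hG, rfl⟩

theorem isGreatest_freeEdgeCounts_T1 {n : ℕ} (hn : n ≠ 3) :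
    IsGreatest (T1.freeEdgeCounts n) (n.choose 2 + n ^ 2 / 4) := by
  refine ⟨?_, ?_⟩
  · obtain ⟨A, -, hA⟩ := exists_subset_card_eq (s := (univ : Finset (Fin n))) (n := n / 2)
      (by rw [card_univ, Fintype.card_fin]; omega)
    refine ⟨splitGraph A, not_T1_isSubgraph_splitGraph A, ?_⟩
    rw [card_E_splitGraph, card_compl, Fintype.card_fin, hA, Nat.div_two_mul_sub_div_two]
  · rintro N ⟨G, hG, rfl⟩
    simpa [hn] using G.card_E_add_card_E_le_of_not_T1_isSubgraph hG

theorem isGreatest_freeEdgeCounts_T1_three : IsGreatest (T1.freeEdgeCounts 3) 6 := by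
  refine ⟨⟨K3, fun ⟨f, hf, _⟩ => ?_, rfl⟩, ?_⟩
  · simpa using Fintype.card_le_of_injective f hf
  · rintro N ⟨G, hG, rfl⟩
    simpa using G.card_E_add_card_E_le_of_not_T1_isSubgraph hG

end ColGraph

lemma choose_two_add_sq_div_four_div_choose_two_mem_Icc {n : ℕ} (hn : 2 ≤ n) :
    ((n.choose 2 + n ^ 2 / 4 : ℕ) : ℝ) / n.choose 2 ∈ Set.Icc (3 / 2 : ℝ) (3 / 2 + 1 / n) := by
  have hq₁ : (n : ℝ) ^ 2 ≤ 4 * ((n ^ 2 / 4 : ℕ) : ℝ) + 1 := by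
    exact_mod_cast Nat.sq_le_four_mul_sq_div_four_add_one n
  have hq₂ : 4 * ((n ^ 2 / 4 : ℕ) : ℝ) ≤ (n : ℝ) ^ 2 := by
    exact_mod_cast Nat.mul_div_le (n ^ 2) 4
  have hn' : (2 : ℝ) ≤ n := by exact_mod_cast hn
  have hc : (0 : ℝ) < n.choose 2 := by exact_mod_cast Nat.choose_pos hn
  rw [Set.mem_Icc, Nat.cast_add, le_div_iff₀ hc, div_le_iff₀ hc]
  rw [Nat.cast_choose_two] at hc ⊢
  constructor
  · nlinarith
  · have : (3 / 2 + 1 / (n : ℝ)) * (n * (n - 1) / 2) =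
        3 / 2 * (n * (n - 1) / 2) + (n - 1) / 2 := by
      field_simp
    nlinarith

lemma tendsto_choose_two_add_sq_div_four_div_choose_two :
    Tendsto (fun n : ℕ => ((n.choose 2 + n ^ 2 / 4 : ℕ) : ℝ) / n.choose 2) atTop
      (nhds (3 / 2)) := by
  have hlim : Tendsto (fun n : ℕ => (3 / 2 : ℝ) + 1 / n) atTop (nhds (3 / 2)) := by
    simpa using tendsto_one_div_atTop_nhds_zero_nat.const_add (3 / 2 : ℝ)
  refine tendsto_of_tendsto_of_tendsto_of_le_of_le' tendsto_const_nhds hlim ?_ ?_ <;>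
    filter_upwards [eventually_ge_atTop 2] with n hn
  exacts [(choose_two_add_sq_div_four_div_choose_two_mem_Icc hn).1,
    (choose_two_add_sq_div_four_div_choose_two_mem_Icc hn).2]

theorem T1_extremal :
    (∀ n : ℕ, 1 ≤ n → n ≠ 3 →
      IsGreatest {N : ℕ | ∃ G : ColGraph 2 2 n, ¬ T1.IsSubgraph G ∧
          (G.E 0).card + (G.E 1).card = N} (n.choose 2 + n ^ 2 / 4)) ∧
    IsGreatest {N : ℕ | ∃ G : ColGraph 2 2 3, ¬ T1.IsSubgraph G ∧
        (G.E 0).card + (G.E 1).card = N} 6 ∧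
    Filter.Tendsto T1.turanDensityN Filter.atTop (nhds (3 / 2)) := by
  refine ⟨fun n _ hn => ColGraph.isGreatest_freeEdgeCounts_T1 hn,
    ColGraph.isGreatest_freeEdgeCounts_T1_three, ?_⟩
  refine tendsto_choose_two_add_sq_div_four_div_choose_two.congr' ?_
  filter_upwards [eventually_ge_atTop 4] with n hn
  rw [ColGraph.turanDensityN_eq_of_isGreatest (ColGraph.isGreatest_freeEdgeCounts_T1 (by omega))]
end

section
/- Let H = (V, E_r, E_b) be a 2-colored graph and let H' be the {2,3}-graph with vertex set V ∪ {v}, where v is a new vertex not in V, whose 2-edges are E_2(H') = E_r and whose 3-edges are E_3(H') = { e ∪ {v} : e ∈ E_b }. Then for every n ≥ 3, every H'-free {2,3}-graph G on n vertices satisfies h_n(G) ≤ π_{n-1}(H), where π_{n-1}(H) is the maximum of h_{n-1} over all H-free 2-colored graphs on n−1 vertices. Consequently, if π_n(H) → c and the maximum density of H'-free {2,3}-graphs on n vertices tends to c', then c' ≤ c, i.e., π(H') ≤ π(H). -/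
open Finset Filter

/-! The link of a vertex `v` of a {2,3}-graph `G` is the 2-colored graph on the other vertices
whose red edges are the 2-edges of `G` avoiding `v` and whose blue edges are the pairs forming a
3-edge with `v`. If some link contained `H`, then `G` would contain `lift23 H` with `v` as the new
vertex. On `n` vertices each 2-edge is red in `n - 2` links and each 3-edge is blue in 3 of them;
since `(n - 2) / C(n-1, 2) = n / C(n, 2)` and `3 / C(n-1, 2) = n / C(n, 3)`, the link densities
average exactly to the density of `G`, so some link is at least as dense as `G`. -/

namespace ColGraph

variable {k r n : ℕ}

theorem card_E_le_choose (G : ColGraph k r n) (i : Fin k) : #(G.E i) ≤ n.choose r := by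
  simpa using card_le_card fun e he ↦ mem_powersetCard.mpr ⟨subset_univ e, G.card_mem i e he⟩

theorem density_nonneg (G : ColGraph k r n) : 0 ≤ G.density := by
  unfold density; positivity

theorem density_le (G : ColGraph k r n) : G.density ≤ k := by
  unfold density
  rcases (Nat.zero_le (n.choose r)).eq_or_lt with h | h
  · simp [← h]
  rw [div_le_iff₀ (by exact_mod_cast h)]
  calc ∑ i, (#(G.E i) : ℝ) ≤ ∑ _i : Fin k, (n.choose r : ℝ) :=
        sum_le_sum fun i _ ↦ by exact_mod_cast G.card_E_le_choose i
    _ = k * n.choose r := by simp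

theorem bddAbove_densities_free {m : ℕ} (H : ColGraph k r m) :
    BddAbove {x : ℝ | ∃ G : ColGraph k r n, ¬ H.IsSubgraph G ∧ G.density = x} :=
  ⟨k, by rintro x ⟨G, -, rfl⟩; exact G.density_le⟩

theorem turanDensityN_nonneg {m : ℕ} (H : ColGraph k r m) : 0 ≤ H.turanDensityN n :=
  Real.sSup_nonneg <| by rintro x ⟨G, -, rfl⟩; exact G.density_nonneg

theorem density_le_turanDensityN {m : ℕ} {H : ColGraph k r m} {G : ColGraph k r n}
    (hG : ¬ H.IsSubgraph G) : G.density ≤ H.turanDensityN n :=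
  le_csSup (bddAbove_densities_free H) ⟨G, hG, rfl⟩

end ColGraph

section DoubleCounting

variable {α : Type*} [Fintype α] [DecidableEq α] {r : ℕ} {S : Finset (Finset α)}

theorem sum_card_filter_mem_of_card_eq (hS : ∀ e ∈ S, #e = r) :
    ∑ v, #{e ∈ S | v ∈ e} = r * #S := by
  have := sum_card_bipartiteAbove_eq_sum_card_bipartiteBelow (s := univ) (t := S) (· ∈ ·)
  simp only [bipartiteAbove, bipartiteBelow, filter_univ_mem] at this
  rw [this, sum_congr rfl hS, sum_const, smul_eq_mul, mul_comm]

theorem sum_card_filter_not_mem_of_card_eq (hS : ∀ e ∈ S, #e = r) :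
    ∑ v, (#{e ∈ S | v ∉ e} : ℝ) = (Fintype.card α - r) * #S := by
  have hsplit (v : α) : (#{e ∈ S | v ∉ e} : ℝ) = #S - #{e ∈ S | v ∈ e} := by
    rw [← card_filter_add_card_filter_not (fun e ↦ v ∈ e) (s := S)]; push_cast; ring
  simp only [hsplit, sum_sub_distrib, ← Nat.cast_sum, sum_card_filter_mem_of_card_eq hS]
  simp only [sum_const, card_univ, smul_eq_mul, Nat.cast_mul]
  ring

end DoubleCounting

theorem succ_div_choose_two_eq {N : ℕ} (hN : 2 ≤ N) :
    ((N : ℝ) + 1) / (N + 1).choose 2 = (N + 1 - 2) / N.choose 2 := by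
  have h : ((N + 1).choose 2 : ℝ) * (N + 1 - 2) = (N + 1) * N.choose 2 := by
    rw [Nat.cast_choose_two, Nat.cast_choose_two]; push_cast; ring
  rw [div_eq_div_iff (by exact_mod_cast (Nat.choose_pos (by omega)).ne')
    (by exact_mod_cast (Nat.choose_pos hN).ne')]
  linarith

theorem succ_div_choose_three_eq {N : ℕ} (hN : 2 ≤ N) :
    ((N : ℝ) + 1) / (N + 1).choose 3 = 3 / N.choose 2 := by
  have h : ((N + 1 : ℕ) : ℝ) * N.choose 2 = (N + 1).choose 3 * 3 := by
    exact_mod_cast Nat.add_one_mul_choose_eq N 2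
  push_cast at h
  rw [div_eq_div_iff (by exact_mod_cast (Nat.choose_pos (by omega)).ne')
    (by exact_mod_cast (Nat.choose_pos hN).ne')]
  linarith

namespace Fin

variable {N : ℕ} (v : Fin (N + 1))

theorem range_image_succAbove :
    Set.range (fun e : Finset (Fin N) ↦ e.image v.succAbove) = {t | v ∉ t} := by
  ext t
  rw [Set.mem_range, Set.mem_ofPred_eq, ← Finset.subset_compl_singleton, ← image_succAbove_univ,
    subset_image_iff]
  simp

theorem range_insert_image_succAbove :
    Set.range (fun e : Finset (Fin N) ↦ insert v (e.image v.succAbove)) = {t | v ∈ t} := by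
  ext t
  refine ⟨by rintro ⟨e, rfl⟩; exact mem_insert_self _ _, fun hv ↦ ?_⟩
  obtain ⟨e, he⟩ : t.erase v ∈ Set.range fun e : Finset (Fin N) ↦ e.image v.succAbove := by
    rw [range_image_succAbove]
    exact notMem_erase v t
  exact ⟨e, by simp only at he ⊢; rw [he, insert_erase hv]⟩

theorem notMem_image_succAbove (e : Finset (Fin N)) : v ∉ e.image v.succAbove :=
  (Set.ext_iff.mp (range_image_succAbove v) _).mp ⟨e, rfl⟩

theorem injective_image_succAbove :
    Function.Injective (fun e : Finset (Fin N) ↦ e.image v.succAbove) :=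
  image_injective succAbove_right_injective

theorem injective_insert_image_succAbove :
    Function.Injective (fun e : Finset (Fin N) ↦ insert v (e.image v.succAbove)) := by
  intro e e' h
  apply injective_image_succAbove v
  simpa only [erase_insert (notMem_image_succAbove v _)] using congrArg (·.erase v) h

end Fin

@[simp]
theorem mk2_E_zero {n : ℕ} (R B : Finset (Finset (Fin n))) (hR hB) : (mk2 R B hR hB).E 0 = R :=
  rfl

@[simp]
theorem mk2_E_one {n : ℕ} (R B : Finset (Finset (Fin n))) (hR hB) : (mk2 R B hR hB).E 1 = B :=
  rfl

namespace Graph23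

variable {N : ℕ}

theorem card_eq_two_of_image_succAbove_mem_E2 {G : Graph23 (N + 1)} {v : Fin (N + 1)}
    {e : Finset (Fin N)} (he : e.image v.succAbove ∈ G.E2) : #e = 2 := by
  rw [← G.card2 _ he, card_image_of_injective _ Fin.succAbove_right_injective]

theorem card_eq_two_of_insert_image_succAbove_mem_E3 {G : Graph23 (N + 1)} {v : Fin (N + 1)}
    {e : Finset (Fin N)} (he : insert v (e.image v.succAbove) ∈ G.E3) : #e = 2 := by
  have := G.card3 _ he
  rw [card_insert_of_notMem (Fin.notMem_image_succAbove v e),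
    card_image_of_injective _ Fin.succAbove_right_injective] at this
  omega

noncomputable def link (G : Graph23 (N + 1)) (v : Fin (N + 1)) : ColGraph 2 2 N :=
  mk2 (G.E2.preimage (fun e ↦ e.image v.succAbove) (Fin.injective_image_succAbove v).injOn)
    (G.E3.preimage (fun e ↦ insert v (e.image v.succAbove))
      (Fin.injective_insert_image_succAbove v).injOn)
    (fun _ he ↦ card_eq_two_of_image_succAbove_mem_E2 (mem_preimage.mp he))
    (fun _ he ↦ by rw [mem_preimage] at he; exact card_eq_two_of_insert_image_succAbove_mem_E3 he)

theorem mem_link_E_zero {G : Graph23 (N + 1)} {v : Fin (N + 1)} {e : Finset (Fin N)} :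
    e ∈ (G.link v).E 0 ↔ e.image v.succAbove ∈ G.E2 := by
  rw [link, mk2_E_zero, mem_preimage]

theorem mem_link_E_one {G : Graph23 (N + 1)} {v : Fin (N + 1)} {e : Finset (Fin N)} :
    e ∈ (G.link v).E 1 ↔ insert v (e.image v.succAbove) ∈ G.E3 := by
  rw [link, mk2_E_one, mem_preimage]

theorem card_link_E_zero (G : Graph23 (N + 1)) (v : Fin (N + 1)) :
    #((G.link v).E 0) = #{e ∈ G.E2 | v ∉ e} := by
  classical
  rw [link, mk2_E_zero, card_preimage]
  simp only [Fin.range_image_succAbove, Set.mem_ofPred_eq]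

theorem card_link_E_one (G : Graph23 (N + 1)) (v : Fin (N + 1)) :
    #((G.link v).E 1) = #{t ∈ G.E3 | v ∈ t} := by
  classical
  rw [link, mk2_E_one, card_preimage]
  simp only [Fin.range_insert_image_succAbove, Set.mem_ofPred_eq]

theorem not_isSubgraph_link {m : ℕ} {H : ColGraph 2 2 m} {G : Graph23 (N + 1)}
    (hG : ¬ (lift23 H).IsSubgraph G) (v : Fin (N + 1)) : ¬ H.IsSubgraph (G.link v) := by
  rintro ⟨f, hf, hmaps⟩
  refine hG ⟨Fin.snoc (v.succAbove ∘ f) v, ?_, ?_, ?_⟩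
  · exact Fin.snoc_injective_iff.mpr ⟨Fin.succAbove_right_injective.comp hf, by simp⟩
  · simp only [lift23, forall_mem_image, image_image, Fin.snoc_comp_castSucc]
    intro e he
    rw [← image_image]
    exact mem_link_E_zero.mp (hmaps 0 e he)
  · simp only [lift23, forall_mem_image, image_insert, image_image, Fin.snoc_comp_castSucc,
      Fin.snoc_last]
    intro e he
    rw [← image_image]
    exact mem_link_E_one.mp (hmaps 1 e he)

theorem density_link (G : Graph23 (N + 1)) (v : Fin (N + 1)) :
    (G.link v).density =
      (#{e ∈ G.E2 | v ∉ e} + #{t ∈ G.E3 | v ∈ t}) / (N.choose 2 : ℝ) := by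
  rw [ColGraph.density, Fin.sum_univ_two, card_link_E_zero, card_link_E_one]

theorem sum_density_link (G : Graph23 (N + 1)) (hN : 2 ≤ N) :
    ∑ v, (G.link v).density = (N + 1) * G.density := by
  simp only [density_link, ← sum_div, sum_add_distrib, sum_card_filter_not_mem_of_card_eq G.card2,
    Fintype.card_fin]
  rw [← Nat.cast_sum, sum_card_filter_mem_of_card_eq G.card3]
  calc (((N + 1 : ℕ) - (2 : ℕ) : ℝ) * #G.E2 + ((3 * #G.E3 : ℕ) : ℝ)) / N.choose 2
      = #G.E2 * ((N + 1 - 2) / N.choose 2) + #G.E3 * (3 / N.choose 2) := by push_cast; ring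
    _ = #G.E2 * ((N + 1) / (N + 1).choose 2) + #G.E3 * ((N + 1) / (N + 1).choose 3) := by
      rw [succ_div_choose_two_eq hN, succ_div_choose_three_eq hN]
    _ = (N + 1) * G.density := by rw [density]; ring

theorem exists_density_le_density_link (G : Graph23 (N + 1)) (hN : 2 ≤ N) :
    ∃ v, G.density ≤ (G.link v).density := by
  obtain ⟨v, -, hv⟩ := exists_le_of_sum_le univ_nonempty (f := fun _ ↦ G.density)
    (g := fun v ↦ (G.link v).density) (by simp [sum_density_link G hN])
  exact ⟨v, hv⟩

theorem density_le_turanDensityN_of_lift23_free {m : ℕ} {H : ColGraph 2 2 m}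
    {G : Graph23 (N + 1)} (hN : 2 ≤ N) (hG : ¬ (lift23 H).IsSubgraph G) :
    G.density ≤ H.turanDensityN N := by
  obtain ⟨v, hv⟩ := G.exists_density_le_density_link hN
  exact hv.trans (ColGraph.density_le_turanDensityN (not_isSubgraph_link hG v))

end Graph23

theorem turanDensityN_lift23_le {m N : ℕ} (H : ColGraph 2 2 m) (hN : 2 ≤ N) :
    (lift23 H).turanDensityN (N + 1) ≤ H.turanDensityN N :=
  Real.sSup_le (by rintro x ⟨G, hG, rfl⟩; exact G.density_le_turanDensityN_of_lift23_free hN hG)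
    H.turanDensityN_nonneg

theorem lift23_turan_density_le {m : ℕ} (H : ColGraph 2 2 m) :
    (∀ n : ℕ, 3 ≤ n → ∀ G : Graph23 n, ¬ (lift23 H).IsSubgraph G →
      G.density ≤ H.turanDensityN (n - 1)) ∧
    ∀ c c' : ℝ, Filter.Tendsto H.turanDensityN Filter.atTop (nhds c) →
      Filter.Tendsto (lift23 H).turanDensityN Filter.atTop (nhds c') → c' ≤ c := by
  refine ⟨fun n hn G hG ↦ ?_, fun c c' hc hc' ↦ ?_⟩
  · obtain ⟨N, rfl⟩ : ∃ N, n = N + 1 := ⟨n - 1, by omega⟩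
    exact G.density_le_turanDensityN_of_lift23_free (by omega) hG
  · exact le_of_tendsto_of_tendsto (hc'.comp (tendsto_add_atTop_nat 1)) hc
      (eventually_atTop.mpr ⟨2, fun N hN ↦ turanDensityN_lift23_le H hN⟩)
end
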